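/- arXiv:2312.13588 — 2 statements merged into one kernel-verified Lean document; each statement's English description precedes it below -/
import Mathlib

section
/- As n → ∞, f_{(0,0,0,1)}(n) ~ √(2n); that is, the limit as n → ∞ of f_{(0,0,0,1)}(n)/√(2n) equals 1. -/
open Finset

/-- A family `F` of subsets of `Fin n` satisfies the `α`-intersection pattern modulo 2
(for `α = (α_1, …, α_k)`, here 0-indexed: `α i` governs intersections of `i+1` distinct sets)
if every subfamily of `i+1` distinct sets has intersection of size `≡ α_i (mod 2)`. -/
def SatisfiesPattern (n k : ℕ) (α : Fin k → ZMod 2) (F : Finset (Finset (Fin n))) : Prop :=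
  ∀ i : Fin k, ∀ S : Finset (Finset (Fin n)), S ⊆ F → S.card = i.val + 1 →
    ((S.inf id).card : ZMod 2) = α i

/-- `maxPattern k α n` is `f_α(n)`, the maximum size of a family of subsets of `[n]`
satisfying the `α`-intersection pattern modulo 2. -/
noncomputable def maxPattern (k : ℕ) (α : Fin k → ZMod 2) (n : ℕ) : ℕ :=
  sSup {m : ℕ | ∃ F : Finset (Finset (Fin n)), SatisfiesPattern n k α F ∧ F.card = m}

/-!
Upper bound, by an Oddtown argument: for a pair `p = {A, B}` of members of `F` let
`S_p = (A ∩ B) ⊔ p ⊔ {∗}` inside `[n] ⊔ F ⊔ {∗}`. The pattern makes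
`|S_p ∩ S_q| = |A ∩ B ∩ C ∩ D| + |p ∩ q| + 1` odd for `p = q` and even for `p ≠ q`, so the
indicator vectors of the `S_p` are linearly independent over `𝔽₂` and
`C(|F|, 2) ≤ n + |F| + 1`, i.e. `|F| ≤ √(2n) + 3`.

Lower bound: for `m ≡ 2 (mod 4)` take on the ground set `[m] ⊔ Sym2 [m]` the sets
`G_a = {a} ⊔ {pairs (loops included) avoiding a}`. A single `G_a` has `1 + C(m, 2)` elements and
`t ≥ 2` of them meet in the `C(m - t + 1, 2)` pairs avoiding all of them; since
`C(j, 2) ≡ ⌊j / 2⌋ (mod 2)`, these have the parities `0, 0, 0, 1` for `t = 1, 2, 3, 4`. The ground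
set has about `m² / 2` elements, so `f(n) ≥ √(2n) - 6`.
-/

theorem Finset.disjSum_inter_disjSum {α β : Type*} [DecidableEq α] [DecidableEq β]
    (s s' : Finset α) (t t' : Finset β) :
    s.disjSum t ∩ s'.disjSum t' = (s ∩ s').disjSum (t ∩ t') := by
  ext (x | x) <;> simp

theorem Finset.inf_map_eq_map_inf {ι α β : Type*} [Fintype α] [Fintype β] [DecidableEq α]
    [DecidableEq β] (e : α ↪ β) (G : ι → Finset α) {T : Finset ι} (hT : T.Nonempty) :
    T.inf (fun a => (G a).map e) = (T.inf G).map e := by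
  ext y
  simp only [mem_inf, mem_map]
  constructor
  · intro hy
    obtain ⟨a, ha⟩ := hT
    obtain ⟨x, -, rfl⟩ := hy a ha
    exact ⟨x, fun b hb => by simpa using hy b hb, rfl⟩
  · rintro ⟨x, hx, rfl⟩ b hb
    exact ⟨x, hx b hb, rfl⟩

theorem Nat.choose_two_mod_two : ∀ j : ℕ, j.choose 2 % 2 = j / 2 % 2
  | 0 | 1 => rfl
  | j + 2 => by
    have hstep : (j + 2).choose 2 = j.choose 2 + 2 * j + 1 := by
      simp only [Nat.choose_succ_succ, Nat.choose_one_right, Nat.choose_zero_right]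
      ring
    have ih := choose_two_mod_two j
    rw [hstep, show (j + 2) / 2 = j / 2 + 1 by omega]
    generalize j / 2 = q at ih ⊢
    omega

theorem linearIndependent_of_dotProduct_eq_ite {R ι κ : Type*} [CommRing R] [Fintype κ]
    [DecidableEq ι] (v : ι → κ → R) (hv : ∀ i j, v i ⬝ᵥ v j = if i = j then 1 else 0) :
    LinearIndependent R v := by
  rw [linearIndependent_iff']
  intro s g hg i hi
  simpa [sum_dotProduct, smul_dotProduct, hv, hi] using congrArg (· ⬝ᵥ v i) hg

theorem oddtown {ι κ : Type*} [DecidableEq ι] [DecidableEq κ] (I : Finset ι) (U : Finset κ)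
    (S : ι → Finset κ) (hSU : ∀ i ∈ I, S i ⊆ U)
    (hS : ∀ i ∈ I, ∀ j ∈ I, ((S i ∩ S j).card : ZMod 2) = if i = j then 1 else 0) :
    I.card ≤ U.card := by
  let v : I → U → ZMod 2 := fun i x => if (x : κ) ∈ S i then 1 else 0
  have hv : ∀ i j, v i ⬝ᵥ v j = if i = j then 1 else 0 := by
    rintro ⟨i, hi⟩ ⟨j, hj⟩
    calc v ⟨i, hi⟩ ⬝ᵥ v ⟨j, hj⟩ = ∑ x ∈ U, if x ∈ S i ∩ S j then 1 else 0 := by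
          simp only [dotProduct, v, ite_zero_mul_ite_zero, one_mul, mem_inter]
          exact sum_coe_sort U (fun x => if x ∈ S i ∧ x ∈ S j then (1 : ZMod 2) else 0)
      _ = _ := by
          rw [sum_boole, filter_mem_eq_inter, inter_eq_right.mpr
            (inter_subset_left.trans (hSU i hi)), hS i hi j hj]
          simp only [Subtype.mk.injEq]
  simpa using (linearIndependent_of_dotProduct_eq_ite v hv).fintype_card_le_finrank

theorem satisfiesPattern_empty (n k : ℕ) (α : Fin k → ZMod 2) : SatisfiesPattern n k α ∅ := by
  intro i S hS hcard
  rw [subset_empty.mp hS, card_empty] at hcard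
  omega

theorem bddAbove_card_satisfiesPattern (n k : ℕ) (α : Fin k → ZMod 2) :
    BddAbove {m : ℕ | ∃ F : Finset (Finset (Fin n)), SatisfiesPattern n k α F ∧ F.card = m} :=
  ⟨Fintype.card (Finset (Fin n)), by rintro m ⟨F, -, rfl⟩; exact F.card_le_univ⟩

theorem card_le_maxPattern {n k : ℕ} {α : Fin k → ZMod 2} {F : Finset (Finset (Fin n))}
    (hF : SatisfiesPattern n k α F) : F.card ≤ maxPattern k α n :=
  le_csSup (bddAbove_card_satisfiesPattern n k α) ⟨F, hF, rfl⟩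

theorem exists_satisfiesPattern_card_eq_maxPattern (n k : ℕ) (α : Fin k → ZMod 2) :
    ∃ F : Finset (Finset (Fin n)), SatisfiesPattern n k α F ∧ F.card = maxPattern k α n :=
  Nat.sSup_mem (s := {m | ∃ F, SatisfiesPattern n k α F ∧ F.card = m})
    ⟨0, ∅, satisfiesPattern_empty n k α, card_empty⟩ (bddAbove_card_satisfiesPattern n k α)

theorem card_le_maxPattern_of_injective {ι γ : Type*} [Fintype ι] [Fintype γ] [DecidableEq γ]
    {n k : ℕ} {α : Fin k → ZMod 2} (G : ι → Finset γ) (hG : Function.Injective G)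
    (hγ : Fintype.card γ ≤ n)
    (hpat : ∀ i : Fin k, ∀ T : Finset ι, T.card = i.val + 1 → ((T.inf G).card : ZMod 2) = α i) :
    Fintype.card ι ≤ maxPattern k α n := by
  obtain ⟨e⟩ : Nonempty (γ ↪ Fin n) :=
    Function.Embedding.nonempty_iff_card_le.mpr (by simpa using hγ)
  let G' : ι ↪ Finset (Fin n) := ⟨fun a => (G a).map e, (map_injective e).comp hG⟩
  refine (card_map G' (s := univ)).symm.trans_le (card_le_maxPattern ?_)
  intro i S hS hcard
  obtain ⟨T, -, rfl⟩ := subset_map_iff.mp hS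
  rw [card_map] at hcard
  rw [inf_map, Function.id_comp]
  show ((T.inf fun a => (G a).map e).card : ZMod 2) = α i
  rw [inf_map_eq_map_inf e G (card_pos.mp (by omega)), card_map]
  exact hpat i T hcard

theorem SatisfiesPattern.natCast_card_inf {n : ℕ} {F S : Finset (Finset (Fin n))}
    (hF : SatisfiesPattern n 4 ![0, 0, 0, 1] F) (hS : S ⊆ F) (h1 : 1 ≤ S.card) (h4 : S.card ≤ 4) :
    ((S.inf id).card : ZMod 2) = if S.card = 4 then 1 else 0 := by
  obtain ⟨c, hc⟩ : ∃ c, S.card = c + 1 := ⟨S.card - 1, by omega⟩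
  have hc3 : c ≤ 3 := by omega
  rw [hF ⟨c, by omega⟩ S hS hc, hc]
  interval_cases c <;> rfl

theorem SatisfiesPattern.card_choose_two_le {n : ℕ} {F : Finset (Finset (Fin n))}
    (hF : SatisfiesPattern n 4 ![0, 0, 0, 1] F) : F.card.choose 2 ≤ n + (F.card + 1) := by
  let U : Finset (Fin n ⊕ (Finset (Fin n) ⊕ Unit)) := univ.disjSum (F.disjSum univ)
  let S : Finset (Finset (Fin n)) → Finset (Fin n ⊕ (Finset (Fin n) ⊕ Unit)) := fun p =>
    (p.inf id).disjSum (p.disjSum univ)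
  have hSU : ∀ p ∈ F.powersetCard 2, S p ⊆ U := fun p hp =>
    disjSum_mono (subset_univ _) (disjSum_mono (mem_powersetCard.mp hp).1 subset_rfl)
  have hS : ∀ p ∈ F.powersetCard 2, ∀ q ∈ F.powersetCard 2,
      ((S p ∩ S q).card : ZMod 2) = if p = q then 1 else 0 := by
    intro p hp q hq
    obtain ⟨hpF, hp2⟩ := mem_powersetCard.mp hp
    obtain ⟨hqF, hq2⟩ := mem_powersetCard.mp hq
    have hunion : (p ∪ q).card + (p ∩ q).card = 4 := by
      rw [card_union_add_card_inter, hp2, hq2]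
    have hle : (p ∩ q).card ≤ 2 := hp2 ▸ card_le_card inter_subset_left
    have hinter : (p ∩ q).card = 2 ↔ p = q := by
      refine ⟨fun h => ?_, fun h => by rw [h, inter_self, hq2]⟩
      rw [← eq_of_subset_of_card_le (inter_subset_left : p ∩ q ⊆ p) (by rw [h, hp2]),
        eq_of_subset_of_card_le (inter_subset_right : p ∩ q ⊆ q) (by rw [h, hq2])]
    have hcard : (S p ∩ S q).card = ((p ∪ q).inf id).card + ((p ∩ q).card + 1) := by
      simp only [S, disjSum_inter_disjSum, card_disjSum, inf_union, inf_eq_inter, inter_self,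
        card_univ, Fintype.card_unit]
    have hpat := hF.natCast_card_inf (union_subset hpF hqF) (by omega) (by omega)
    rw [hcard]
    push_cast
    rw [hpat]
    obtain h | h | h : (p ∩ q).card = 0 ∨ (p ∩ q).card = 1 ∨ (p ∩ q).card = 2 := by omega
    all_goals rw [show (p ∪ q).card = 4 - (p ∩ q).card by omega]; simp only [← hinter, h]; decide
  simpa [U] using oddtown (F.powersetCard 2) U S hSU hS

theorem maxPattern_le_sqrt_add (n : ℕ) :
    (maxPattern 4 ![0, 0, 0, 1] n : ℝ) ≤ √(2 * n) + 3 := by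
  obtain ⟨F, hF, hFcard⟩ := exists_satisfiesPattern_card_eq_maxPattern n 4 ![0, 0, 0, 1]
  set M := maxPattern 4 ![0, 0, 0, 1] n
  have hM : (M : ℝ) * (M - 1) / 2 ≤ n + (M + 1) := by
    rw [← Nat.cast_choose_two, ← hFcard]
    exact_mod_cast hF.card_choose_two_le
  rcases le_or_gt M 3 with hM3 | hM4
  · have : (M : ℝ) ≤ 3 := by exact_mod_cast hM3
    linarith [Real.sqrt_nonneg (2 * n)]
  · have : (4 : ℝ) ≤ M := by exact_mod_cast hM4
    linarith [Real.le_sqrt_of_sq_le (x := M - 3) (y := 2 * n) (by nlinarith)]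

def pointAndPairsAvoiding (m : ℕ) (a : Fin m) : Finset (Fin m ⊕ Sym2 (Fin m)) :=
  ({a} : Finset (Fin m)).disjSum (univ.erase a).sym2

theorem pointAndPairsAvoiding_injective (m : ℕ) : Function.Injective (pointAndPairsAvoiding m) := by
  intro a b hab
  have : Sum.inl a ∈ pointAndPairsAvoiding m b := hab ▸ inl_mem_disjSum.mpr (mem_singleton_self a)
  simpa [pointAndPairsAvoiding] using this

theorem card_pointAndPairsAvoiding {m : ℕ} (a : Fin m) :
    (pointAndPairsAvoiding m a).card = 1 + m.choose 2 := by
  rw [pointAndPairsAvoiding, card_disjSum, card_singleton, card_sym2,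
    card_erase_of_mem (mem_univ a), card_univ, Fintype.card_fin, Nat.sub_add_cancel (Fin.pos a)]

theorem card_inf_pointAndPairsAvoiding {m : ℕ} {T : Finset (Fin m)} (hT : 1 < T.card) :
    (T.inf (pointAndPairsAvoiding m)).card = (m - T.card + 1).choose 2 := by
  obtain ⟨a, ha, b, hb, hab⟩ := one_lt_card.mp hT
  have hinf : T.inf (pointAndPairsAvoiding m) = (∅ : Finset (Fin m)).disjSum (univ \ T).sym2 := by
    ext (x | e)
    · simp only [mem_inf, pointAndPairsAvoiding, inl_mem_disjSum, mem_singleton, notMem_empty,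
        iff_false]
      exact fun h => hab ((h a ha).symm.trans (h b hb))
    · simp only [mem_inf, pointAndPairsAvoiding, inr_mem_disjSum, mem_sym2_iff, mem_erase,
        mem_sdiff, mem_univ, and_true, true_and]
      exact ⟨fun h y hy hyT => h y hyT y hy rfl, fun h c hc y hy hyc => h y hy (hyc ▸ hc)⟩
  rw [hinf, card_disjSum, card_empty, zero_add, card_sym2, card_univ_sdiff, Fintype.card_fin]

theorem natCast_card_inf_pointAndPairsAvoiding {m : ℕ} (hm : m % 4 = 2) (i : Fin 4)
    (T : Finset (Fin m)) (hT : T.card = i.val + 1) :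
    ((T.inf (pointAndPairsAvoiding m)).card : ZMod 2) = ![0, 0, 0, 1] i := by
  have hTm : T.card ≤ m := (card_le_univ T).trans_eq (Fintype.card_fin m)
  rw [← ZMod.natCast_mod]
  obtain ⟨i, hi⟩ := i
  simp only at hT
  interval_cases i
  · obtain ⟨a, rfl⟩ := card_eq_one.mp hT
    have hpar : (1 + m.choose 2) % 2 = 0 := by rw [Nat.add_mod, Nat.choose_two_mod_two]; omega
    rw [inf_singleton, card_pointAndPairsAvoiding, hpar]
    rfl
  all_goals
    rw [card_inf_pointAndPairsAvoiding (by omega), hT, Nat.choose_two_mod_two]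
  · rw [show (m - (1 + 1) + 1) / 2 % 2 = 0 by omega]; rfl
  · rw [show (m - (2 + 1) + 1) / 2 % 2 = 0 by omega]; rfl
  · rw [show (m - (3 + 1) + 1) / 2 % 2 = 1 by omega]; rfl

theorem le_maxPattern_of_mod_four_eq_two {m n : ℕ} (hm : m % 4 = 2)
    (hn : m + (m + 1).choose 2 ≤ n) : m ≤ maxPattern 4 ![0, 0, 0, 1] n := by
  simpa using card_le_maxPattern_of_injective (pointAndPairsAvoiding m)
    (pointAndPairsAvoiding_injective m) (by simpa [Sym2.card] using hn)
    (natCast_card_inf_pointAndPairsAvoiding hm)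

theorem sqrt_sub_le_maxPattern (n : ℕ) : √(2 * n) - 6 ≤ (maxPattern 4 ![0, 0, 0, 1] n : ℝ) := by
  set s := Nat.sqrt (2 * n)
  have hs : √(2 * n : ℝ) < s + 1 := by exact_mod_cast Real.real_sqrt_lt_nat_sqrt_succ (a := 2 * n)
  rcases lt_or_ge s 4 with hs4 | hs4
  · have : (s : ℝ) + 1 ≤ 5 := by exact_mod_cast (by omega : s + 1 ≤ 5)
    linarith [Nat.cast_nonneg (α := ℝ) (maxPattern 4 ![0, 0, 0, 1] n)]
  · -- the largest `m ≡ 2 (mod 4)` with `m + 2 ≤ s`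
    set m := s - 2 - (s - 4) % 4
    have hm : m % 4 = 2 := by omega
    have hn : m + (m + 1).choose 2 ≤ n := by
      have hchoose : (m + 1).choose 2 * 2 = (m + 1) * m := by
        simpa using (Nat.add_one_mul_choose_eq m 1).symm
      have hsq : (m + 2) * (m + 2) ≤ s * s := Nat.mul_le_mul (by omega) (by omega)
      nlinarith [Nat.sqrt_le (2 * n)]
    have hsm : (s : ℝ) ≤ m + 5 := by exact_mod_cast (by omega : s ≤ m + 5)
    have hmf : (m : ℝ) ≤ maxPattern 4 ![0, 0, 0, 1] n := by
      exact_mod_cast le_maxPattern_of_mod_four_eq_two hm hn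
    linarith

open Filter Asymptotics in
theorem f_0001_asymp :
    Filter.Tendsto (fun n : ℕ => (maxPattern 4 ![0, 0, 0, 1] n : ℝ) / Real.sqrt (2 * n))
      Filter.atTop (nhds 1) := by
  have hsqrt : Tendsto (fun n : ℕ => √(2 * n)) atTop atTop :=
    Real.tendsto_sqrt_atTop.comp (tendsto_natCast_atTop_atTop.const_mul_atTop two_pos)
  have hbdd : (fun n : ℕ => (maxPattern 4 ![0, 0, 0, 1] n : ℝ) - √(2 * n)) =O[atTop]
      fun _ => (1 : ℝ) := by
    refine .of_bound 6 (Eventually.of_forall fun n => ?_)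
    rw [norm_one, mul_one, Real.norm_eq_abs, abs_sub_le_iff]
    exact ⟨by linarith [maxPattern_le_sqrt_add n], by linarith [sqrt_sub_le_maxPattern n]⟩
  have hequiv : (fun n : ℕ => (maxPattern 4 ![0, 0, 0, 1] n : ℝ)) ~[atTop] fun n => √(2 * n) :=
    hbdd.trans_isLittleO ((isLittleO_one_left_iff ℝ).mpr (tendsto_norm_atTop_atTop.comp hsqrt))
  exact (isEquivalent_iff_tendsto_one (hsqrt.eventually_ne_atTop 0)).mp hequiv
end

section
/- For every n ≥ 2, the maximum size of a family of subsets of [n] satisfying the (1,0,1,0)-intersection pattern modulo 2 equals n when n is even and equals n − 1 when n is odd; that is, f_{(1,0,1,0)}(n) = n for even n and f_{(1,0,1,0)}(n) = n − 1 for odd n ≥ 3. Moreover, as n → ∞, f_{(0,0,1,1)}(n) ~ √(2n). -/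
open Finset

/-!
Over `𝔽₂`, the incidence matrix `M` of a family whose members have odd size and pairwise even
intersections satisfies `M Mᵀ = 1` (oddtown), so the family has at most `n` members: this is the
upper bound for `(1,0,1,0)`. When `n` is odd and the family has `n` members, `M` is square, so
`Mᵀ M = 1` as well and every point lies in an odd number of members; then `∑_C |A ∩ B ∩ C|` is
`≡ |A ∩ B| ≡ 0`, while the triple condition makes it `≡ n - 2 ≡ 1`. Complements of singletons in
an even ground set attain the bounds.

For `(0,0,1,1)`, the sets `A ∩ B` over pairs of members have even size, and two of them meet in
the intersection of three or four members, which is odd. After adjoining a common new point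
they form an oddtown family on `n + 1` points, so `f(f - 1)/2 ≤ n + 1`. Conversely, for
`m ≡ 2 (mod 4)`, the `m` sets `{2-subsets of [m] avoiding i}` meet `s` at a time in
`binom(m - s, 2)` pairs, which has the parities `0, 0, 1, 1` for `s = 1, …, 4`. Both bounds are
`√(2n) + O(1)`.
-/

open scoped Matrix

namespace Oddtown

variable {ι β : Type*} [DecidableEq β]

def incMatrix (R : Type*) [Zero R] [One R] (g : ι → Finset β) : Matrix ι β R :=
  Matrix.of fun i x => if x ∈ g i then 1 else 0

variable [Fintype β]

lemma incMatrix_mul_transpose_apply {R : Type*} [NonAssocSemiring R] (g : ι → Finset β)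
    (i j : ι) : (incMatrix R g * (incMatrix R g)ᵀ) i j = ((g i ∩ g j).card : R) := by
  simp only [incMatrix, Matrix.mul_apply, Matrix.transpose_apply, Matrix.of_apply, mul_ite,
    mul_one, mul_zero, ← ite_and, sum_boole]
  congr 2
  ext x
  simp [and_comm]

lemma incMatrix_mul_transpose_eq_one [DecidableEq ι] {g : ι → Finset β}
    (hodd : ∀ i, ((g i).card : ZMod 2) = 1)
    (heven : ∀ i j, i ≠ j → ((g i ∩ g j).card : ZMod 2) = 0) :
    incMatrix (ZMod 2) g * (incMatrix (ZMod 2) g)ᵀ = 1 := by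
  ext i j
  rw [incMatrix_mul_transpose_apply, Matrix.one_apply]
  split_ifs with hij
  · rw [hij, inter_self, hodd]
  · exact heven i j hij

variable [Fintype ι]

lemma sum_card_inter_eq_card {K : Type*} [Field K] [DecidableEq ι] (g : ι → Finset β)
    (hcard : Fintype.card ι = Fintype.card β)
    (h : incMatrix K g * (incMatrix K g)ᵀ = 1) (T : Finset β) :
    ∑ i, ((T ∩ g i).card : K) = T.card := by
  have h' : (incMatrix K g)ᵀ * incMatrix K g = 1 :=
    (Matrix.mul_eq_one_comm_of_equiv (Fintype.equivOfCardEq hcard)).mp h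
  have hcol (x : β) : ∑ i, (if x ∈ g i then 1 else 0 : K) = 1 := by
    simpa only [incMatrix, Matrix.mul_apply, Matrix.transpose_apply, Matrix.of_apply, mul_ite,
      mul_one, mul_zero, ← ite_and, and_self, Matrix.one_apply_eq]
      using congr_fun (congr_fun h' x) x
  calc ∑ i, ((T ∩ g i).card : K) = ∑ i, ∑ x ∈ T, (if x ∈ g i then 1 else 0 : K) := by simp
    _ = ∑ x ∈ T, 1 := by rw [sum_comm]; exact sum_congr rfl fun x _ => hcol x
    _ = T.card := by simp

omit [DecidableEq β] in
lemma card_le_of_mul_transpose_eq_one {K : Type*} [Field K] [DecidableEq ι] (M : Matrix ι β K)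
    (h : M * Mᵀ = 1) : Fintype.card ι ≤ Fintype.card β :=
  calc Fintype.card ι = (M * Mᵀ).rank := by rw [h, Matrix.rank_one]
    _ ≤ M.rank := Matrix.rank_mul_le_left _ _
    _ ≤ Fintype.card β := M.rank_le_card_width

theorem card_le_of_odd_card_even_inter (g : ι → Finset β)
    (hodd : ∀ i, ((g i).card : ZMod 2) = 1)
    (heven : ∀ i j, i ≠ j → ((g i ∩ g j).card : ZMod 2) = 0) :
    Fintype.card ι ≤ Fintype.card β := by
  classical
  exact card_le_of_mul_transpose_eq_one _ (incMatrix_mul_transpose_eq_one hodd heven)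

theorem card_le_of_even_card_odd_inter (g : ι → Finset β)
    (heven : ∀ i, ((g i).card : ZMod 2) = 0)
    (hodd : ∀ i j, i ≠ j → ((g i ∩ g j).card : ZMod 2) = 1) :
    Fintype.card ι ≤ Fintype.card β + 1 := by
  let g' (i : ι) : Finset (Option β) := insert none ((g i).map .some)
  have card_inter_g' (i j : ι) : (g' i ∩ g' j).card = (g i ∩ g j).card + 1 := by
    rw [← insert_inter_distrib, ← map_inter, card_insert_of_notMem (by simp), card_map]
  have := card_le_of_odd_card_even_inter g'
    (fun i => by
      rw [← inter_self (g' i), card_inter_g', inter_self, Nat.cast_succ, heven, zero_add])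
    (fun i j hij => by
      rw [card_inter_g', Nat.cast_succ, hodd i j hij, CharTwo.add_self_eq_zero])
  simpa using this

end Oddtown

open Oddtown

section MaxPattern

variable {n k : ℕ} {α : Fin k → ZMod 2}

lemma le_maxPattern {F : Finset (Finset (Fin n))} (hF : SatisfiesPattern n k α F) :
    F.card ≤ maxPattern k α n :=
  le_csSup ⟨Fintype.card (Finset (Fin n)), by rintro m ⟨G, -, rfl⟩; exact G.card_le_univ⟩
    ⟨F, hF, rfl⟩

lemma maxPattern_le {b : ℕ}
    (h : ∀ F : Finset (Finset (Fin n)), SatisfiesPattern n k α F → F.card ≤ b) :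
    maxPattern k α n ≤ b :=
  csSup_le' fun _ ⟨F, hF, hm⟩ => hm ▸ h F hF

lemma card_le_maxPattern_s18 {ι β : Type*} [Fintype ι] [Fintype β] [DecidableEq β]
    (f : ι → Finset β) (hf : Function.Injective f) (hβ : Fintype.card β ≤ n)
    (hα : ∀ (i : Fin k) (I : Finset ι), I.card = i + 1 → ((I.inf f).card : ZMod 2) = α i) :
    Fintype.card ι ≤ maxPattern k α n := by
  classical
  obtain ⟨e⟩ := Function.Embedding.nonempty_of_card_le (hβ.trans (Fintype.card_fin n).ge)
  let g (i : ι) : Finset (Fin n) := (f i).map e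
  have hg : Function.Injective g := (map_injective e).comp hf
  have card_inf_g (I : Finset ι) (hI : I.Nonempty) : (I.inf g).card = (I.inf f).card := by
    rw [← inf'_eq_inf hI, ← inf'_eq_inf hI, ← card_map e]
    exact congrArg card (apply_inf'_eq_inf'_comp hI (map e) fun s t => map_inter s t).symm
  have hpattern : SatisfiesPattern n k α (univ.image g) := by
    intro i S hS hSc
    obtain ⟨I, -, rfl⟩ := subset_image_iff.1 hS
    rw [card_image_of_injective _ hg] at hSc
    rw [inf_image, Function.id_comp, card_inf_g I (card_pos.1 (by omega)), hα i I hSc]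
  simpa [card_image_of_injective _ hg] using le_maxPattern hpattern

end MaxPattern

namespace SatisfiesPattern

variable {n : ℕ} {α : Fin 4 → ZMod 2} {F : Finset (Finset (Fin n))} {A B C : Finset (Fin n)}

lemma card_cast (hF : SatisfiesPattern n 4 α F) (hA : A ∈ F) : (A.card : ZMod 2) = α 0 := by
  simpa using hF 0 {A} (by simpa) rfl

lemma card_inter_cast (hF : SatisfiesPattern n 4 α F) (hA : A ∈ F) (hB : B ∈ F) (hAB : A ≠ B) :
    ((A ∩ B).card : ZMod 2) = α 1 := by
  simpa using hF 1 {A, B} (by simp [insert_subset_iff, hA, hB]) (card_pair hAB)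

lemma card_inter_inter_cast (hF : SatisfiesPattern n 4 α F) (hA : A ∈ F) (hB : B ∈ F)
    (hC : C ∈ F) (hAB : A ≠ B) (hAC : A ≠ C) (hBC : B ≠ C) :
    ((A ∩ B ∩ C).card : ZMod 2) = α 2 := by
  have hcard : ({A, B, C} : Finset (Finset (Fin n))).card = 3 := by
    rw [card_insert_of_notMem (by simp [hAB, hAC]), card_pair hBC]
  simpa [inter_assoc] using hF 2 {A, B, C} (by simp [insert_subset_iff, hA, hB, hC]) hcard

theorem card_le (hF : SatisfiesPattern n 4 α F) (h0 : α 0 = 1) (h1 : α 1 = 0) : F.card ≤ n := by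
  simpa using card_le_of_odd_card_even_inter (fun A : F => (A : Finset (Fin n)))
    (fun A => (hF.card_cast A.2).trans h0)
    (fun A B hAB => (hF.card_inter_cast A.2 B.2 (Subtype.coe_ne_coe.2 hAB)).trans h1)

theorem even_of_card_eq (hF : SatisfiesPattern n 4 α F) (h0 : α 0 = 1) (h1 : α 1 = 0)
    (h2 : α 2 = 1) (hcard : F.card = n) (hn : 2 ≤ n) : Even n := by
  classical
  obtain ⟨A, hA, B, hB, hAB⟩ := one_lt_card.1 (hcard ▸ hn)
  have hAB₀ : ((A ∩ B).card : ZMod 2) = 0 := (hF.card_inter_cast hA hB hAB).trans h1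
  have hsum := sum_card_inter_eq_card (fun C : F => (C : Finset (Fin n))) (by simp [hcard])
    (incMatrix_mul_transpose_eq_one (fun C => (hF.card_cast C.2).trans h0)
      (fun C D hCD => (hF.card_inter_cast C.2 D.2 (Subtype.coe_ne_coe.2 hCD)).trans h1))
    (A ∩ B)
  have hB' : B ∈ F.erase A := mem_erase.2 ⟨hAB.symm, hB⟩
  have hrest : ∀ C ∈ (F.erase A).erase B, ((A ∩ B ∩ C).card : ZMod 2) = 1 := fun C hC => by
    obtain ⟨hCB, hC⟩ := mem_erase.1 hC
    obtain ⟨hCA, hC⟩ := mem_erase.1 hC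
    exact (hF.card_inter_inter_cast hA hB hC hAB (Ne.symm hCA) (Ne.symm hCB)).trans h2
  rw [sum_coe_sort F (fun C => ((A ∩ B ∩ C).card : ZMod 2)), ← add_sum_erase _ _ hA,
    ← add_sum_erase _ _ hB', sum_congr rfl hrest, inter_right_comm, inter_self, inter_assoc,
    inter_self, hAB₀, sum_const, card_erase_of_mem hB', card_erase_of_mem hA,
    hcard, nsmul_one] at hsum
  have : Even (n - 1 - 1) := (ZMod.natCast_eq_zero_iff_even).1 (by simpa using hsum)
  grind

theorem choose_card_two_le (hF : SatisfiesPattern n 4 α F) (h1 : α 1 = 0) (h2 : α 2 = 1)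
    (h3 : α 3 = 1) : F.card.choose 2 ≤ n + 1 := by
  have hodd : ∀ S ⊆ F, 3 ≤ S.card → S.card ≤ 4 → ((S.inf id).card : ZMod 2) = 1 := by
    intro S hS hS3 hS4
    obtain h | h : S.card = 2 + 1 ∨ S.card = 3 + 1 := by omega
    exacts [(hF 2 S hS h).trans h2, (hF 3 S hS h).trans h3]
  have key := card_le_of_even_card_odd_inter (fun p : F.powersetCard 2 => p.1.inf id)
    (fun p => by
      obtain ⟨hp, hp2⟩ := mem_powersetCard.1 p.2
      exact (hF 1 p.1 hp hp2).trans h1)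
    (fun p q hpq => by
      obtain ⟨hp, hp2⟩ := mem_powersetCard.1 p.2
      obtain ⟨hq, hq2⟩ := mem_powersetCard.1 q.2
      rw [← inf_eq_inter, ← inf_union]
      refine hodd _ (union_subset hp hq) ?_ ((card_union_le _ _).trans (by omega))
      by_contra! hlt
      have hp' := eq_of_subset_of_card_le (subset_union_left : p.1 ⊆ p.1 ∪ q.1) (by omega)
      have hq' := eq_of_subset_of_card_le (subset_union_right : q.1 ⊆ p.1 ∪ q.1) (by omega)
      exact hpq (Subtype.ext (hp'.trans hq'.symm)))
  rwa [Fintype.card_coe, card_powersetCard, Fintype.card_fin] at key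

end SatisfiesPattern

section OneZeroOneZero

variable {n : ℕ}

lemma le_maxPattern_one_zero_one_zero {N : ℕ} (hN : Even N) (hNn : N ≤ n) :
    N ≤ maxPattern 4 ![1, 0, 1, 0] n := by
  have hinf (I : Finset (Fin N)) : I.inf (fun i => {i}ᶜ) = Iᶜ := by ext; simp [mem_inf]
  simpa using card_le_maxPattern_s18 (fun i : Fin N => ({i}ᶜ : Finset (Fin N)))
    (compl_injective.comp singleton_injective) (by simpa) fun i I hI => by
      rw [hinf, card_compl, Fintype.card_fin, Nat.cast_sub (by simpa using card_le_univ I),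
        hN.natCast_zmod_two, zero_sub, hI]
      fin_cases i <;> decide

theorem maxPattern_one_zero_one_zero_of_even (hn : Even n) :
    maxPattern 4 ![1, 0, 1, 0] n = n :=
  le_antisymm (maxPattern_le fun _ hF => hF.card_le rfl rfl)
    (le_maxPattern_one_zero_one_zero hn le_rfl)

theorem maxPattern_one_zero_one_zero_of_odd (hn : Odd n) (h3 : 3 ≤ n) :
    maxPattern 4 ![1, 0, 1, 0] n = n - 1 := by
  refine le_antisymm (maxPattern_le fun F hF => ?_)
    (le_maxPattern_one_zero_one_zero (Nat.Odd.sub_odd hn odd_one) (Nat.sub_le n 1))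
  have hne : F.card ≠ n := fun h =>
    Nat.not_even_iff_odd.2 hn (hF.even_of_card_eq rfl rfl rfl h (by omega))
  have := hF.card_le rfl rfl
  omega

end OneZeroOneZero

section ZeroZeroOneOne

lemma card_inf_avoiding {α : Type*} [Fintype α] [DecidableEq α] (r : ℕ) (I : Finset α) :
    (I.inf fun i => univ.filter fun s : {s : Finset α // s.card = r} => i ∉ s.1).card =
      (Fintype.card α - I.card).choose r := by
  rw [← card_compl, ← card_powersetCard, ← card_map (Function.Embedding.subtype _)]
  congr 1
  ext t
  simp only [mem_map, mem_inf, mem_filter, mem_univ, true_and, Function.Embedding.subtype_apply,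
    mem_powersetCard, subset_iff, mem_compl]
  constructor
  · rintro ⟨s, hs, rfl⟩
    exact ⟨fun x hx hxI => hs x hxI hx, s.2⟩
  · rintro ⟨ht, htr⟩
    exact ⟨⟨t, htr⟩, fun i hi hit => ht hit hi, rfl⟩

lemma choose_two_add_four_mul_cast (k q : ℕ) :
    ((k + 4 * q).choose 2 : ZMod 2) = k.choose 2 := by
  induction q with
  | zero => rfl
  | succ q ih =>
    have h : (k + 4 * q + 4).choose 2 = (k + 4 * q).choose 2 + 2 * (2 * (k + 4 * q) + 3) := by
      simp [Nat.choose_succ_succ', Nat.choose_one_right]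
      ring
    rw [mul_add, mul_one, ← add_assoc, h, Nat.cast_add, ih, Nat.cast_mul, ZMod.natCast_self,
      zero_mul, add_zero]

variable {n : ℕ}

lemma le_maxPattern_zero_zero_one_one (q : ℕ) (h : (4 * q + 6).choose 2 ≤ n) :
    4 * q + 6 ≤ maxPattern 4 ![0, 0, 1, 1] n := by
  set m := 4 * q + 6
  let f (i : Fin m) : Finset {s : Finset (Fin m) // s.card = 2} := univ.filter fun s => i ∉ s.1
  have hf : Function.Injective f := by
    intro i j hij
    by_contra hne
    obtain ⟨x, -, hx⟩ := exists_mem_notMem_of_card_lt_card (s := {i, j}) (t := univ)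
      ((card_le_two).trans_lt (by simp [m]))
    have hjx : j ≠ x := fun h => hx (by simp [h])
    have hmem : (⟨{j, x}, card_pair hjx⟩ : {s : Finset (Fin m) // s.card = 2}) ∈ f i := by
      simp only [f, mem_filter, mem_univ, true_and, mem_insert, mem_singleton, not_or]
      exact ⟨hne, fun h => hx (by simp [h])⟩
    simp [hij, f] at hmem
  simpa using card_le_maxPattern_s18 f hf (by simpa [Fintype.card_finset_len]) fun i I hI => by
    rw [card_inf_avoiding, Fintype.card_fin, hI,
      show m - (i + 1) = (5 - i) + 4 * q by omega, choose_two_add_four_mul_cast]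
    fin_cases i <;> rfl

lemma maxPattern_zero_zero_one_one_le_sqrt_add :
    maxPattern 4 ![0, 0, 1, 1] n ≤ Nat.sqrt (2 * n) + 2 :=
  maxPattern_le fun F hF => by
    have hchoose := hF.choose_card_two_le rfl rfl rfl
    by_contra! hlt
    have h1 := Nat.choose_le_choose 2 (Nat.succ_le_of_lt hlt)
    have h2 := Nat.add_one_mul_choose_eq (Nat.sqrt (2 * n) + 2) 1
    have h3 := Nat.lt_succ_sqrt (2 * n)
    simp only [Nat.choose_one_right] at h2
    nlinarith

lemma sqrt_le_maxPattern_zero_zero_one_one_add (h : 6 ≤ Nat.sqrt (2 * n)) :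
    Nat.sqrt (2 * n) ≤ maxPattern 4 ![0, 0, 1, 1] n + 3 := by
  set q := (Nat.sqrt (2 * n) - 6) / 4
  have hq : 4 * q + 6 ≤ Nat.sqrt (2 * n) := by omega
  have hchoose : (4 * q + 6).choose 2 ≤ n := by
    have h1 := Nat.add_one_mul_choose_eq (4 * q + 5) 1
    have h2 := Nat.sqrt_le (2 * n)
    simp only [Nat.choose_one_right] at h1
    nlinarith
  have := le_maxPattern_zero_zero_one_one q hchoose
  omega

open Asymptotics Filter Topology

lemma isEquivalent_of_abs_sub_le {α : Type*} {l : Filter α} {u v : α → ℝ}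
    (hv : Tendsto v l atTop) (C : ℝ) (h : ∀ᶠ x in l, |u x - v x| ≤ C) : u ~[l] v :=
  (IsBigO.of_bound C (h.mono fun x hx => by simpa using hx) :
    (u - v) =O[l] fun _ => (1 : ℝ)).trans_isLittleO
    ((isLittleO_one_left_iff ℝ).2 (tendsto_abs_atTop_atTop.comp hv))

theorem tendsto_maxPattern_zero_zero_one_one_div_sqrt :
    Tendsto (fun n : ℕ => (maxPattern 4 ![0, 0, 1, 1] n : ℝ) / Real.sqrt (2 * n)) atTop (𝓝 1) := by
  have hsqrt : Tendsto (fun n : ℕ => Real.sqrt (2 * n)) atTop atTop :=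
    Real.tendsto_sqrt_atTop.comp (tendsto_natCast_atTop_atTop.const_mul_atTop two_pos)
  have hbound : ∀ᶠ n : ℕ in atTop,
      |(maxPattern 4 ![0, 0, 1, 1] n : ℝ) - Real.sqrt (2 * n)| ≤ 4 := by
    filter_upwards [eventually_ge_atTop 18] with n hn
    have hup : (maxPattern 4 ![0, 0, 1, 1] n : ℝ) ≤ Nat.sqrt (2 * n) + 2 := by
      exact_mod_cast maxPattern_zero_zero_one_one_le_sqrt_add
    have hlow : (Nat.sqrt (2 * n) : ℝ) ≤ maxPattern 4 ![0, 0, 1, 1] n + 3 := by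
      exact_mod_cast sqrt_le_maxPattern_zero_zero_one_one_add (Nat.le_sqrt.2 (by omega))
    have h1 := Real.nat_sqrt_le_real_sqrt (a := 2 * n)
    have h2 := Real.real_sqrt_lt_nat_sqrt_succ (a := 2 * n)
    push_cast at h1 h2
    rw [abs_le]
    constructor <;> linarith
  exact (isEquivalent_iff_tendsto_one (hsqrt.eventually_gt_atTop 0 |>.mono fun _ h => h.ne')).1
    (isEquivalent_of_abs_sub_le hsqrt 4 hbound)

end ZeroZeroOneOne

theorem f_1010_and_0011 :
    (∀ n : ℕ, 2 ≤ n → Even n → maxPattern 4 ![1, 0, 1, 0] n = n) ∧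
    (∀ n : ℕ, 3 ≤ n → Odd n → maxPattern 4 ![1, 0, 1, 0] n = n - 1) ∧
    Filter.Tendsto (fun n : ℕ => (maxPattern 4 ![0, 0, 1, 1] n : ℝ) / Real.sqrt (2 * n))
      Filter.atTop (nhds 1) :=
  ⟨fun _ _ hn => maxPattern_one_zero_one_zero_of_even hn,
    fun _ h3 hn => maxPattern_one_zero_one_zero_of_odd hn h3,
    tendsto_maxPattern_zero_zero_one_one_div_sqrt⟩
end
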